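/- arXiv:2508.07367 — 16 statements merged into one kernel-verified Lean document; each statement's English description precedes it below -/
import Mathlib

section
/- For every positive integer q and every i in {0, 2, 3, 4}, setting a = 5q + i, there exist positive integers b, c, d such that 5/a = 1/b + 1/c + 1/d. -/
/-- For every positive integer `q` and every `i ∈ {0, 2, 3, 4}`, setting `a = 5q + i`,
there exist positive integers `b, c, d` with `5/a = 1/b + 1/c + 1/d`. -/
theorem stmt_0 (q : ℕ) (hq : 0 < q) (i : ℕ) (hi : i = 0 ∨ i = 2 ∨ i = 3 ∨ i = 4) :
    ∃ b c d : ℕ, 0 < b ∧ 0 < c ∧ 0 < d ∧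
      (5 : ℚ) / (5 * q + i) = 1 / b + 1 / c + 1 / d := by
  have hq' : (0 : ℚ) < (q : ℚ) := by exact_mod_cast hq
  rcases hi with rfl | rfl | rfl | rfl
  · exact ⟨2 * q, 3 * q, 6 * q, by positivity, by positivity, by positivity, by
      push_cast; field_simp; ring⟩
  · exact ⟨2 * q + 1, 2 * q + 1, (5 * q + 2) * (2 * q + 1), by positivity, by positivity,
      by positivity, by push_cast; field_simp; ring⟩
  · exact ⟨q + 1, (5 * q + 3) * (q + 1), (5 * q + 3) * (q + 1), by positivity, by positivity,
      by positivity, by push_cast; field_simp; ring⟩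
  · exact ⟨2 * (q + 1), 2 * (q + 1), (5 * q + 4) * (q + 1), by positivity, by positivity,
      by positivity, by push_cast; field_simp; ring⟩
end

section
/- For every positive integer q with q not congruent to 0 modulo 12, setting a = 5q + 1, there exist positive integers b, c, d such that 5/a = 1/b + 1/c + 1/d. -/
/-- For every positive integer `q` with `q ≢ 0 (mod 12)`, setting `a = 5q + 1`,
there exist positive integers `b, c, d` with `5/a = 1/b + 1/c + 1/d`. -/
theorem stmt_1 (q : ℕ) (hq : 0 < q) (h12 : q % 12 ≠ 0) :
    ∃ b c d : ℕ, 0 < b ∧ 0 < c ∧ 0 < d ∧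
      (5 : ℚ) / (5 * q + 1) = 1 / b + 1 / c + 1 / d := by
  obtain ⟨k, r, hr, rfl⟩ : ∃ k r, r < 12 ∧ q = 12 * k + r :=
    ⟨q / 12, q % 12, Nat.mod_lt _ (by norm_num), by omega⟩
  have hcases : (∃ m, 12*k+r = 2*m+1) ∨ (∃ m, 12*k+r = 4*m+2) ∨
      (∃ k', 12*k+r = 12*k'+4) ∨ (∃ k', 12*k+r = 12*k'+8) := by
    interval_cases r
    · omega
    · exact Or.inl ⟨6*k, by ring⟩
    · exact Or.inr (Or.inl ⟨3*k, by ring⟩)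
    · exact Or.inl ⟨6*k+1, by ring⟩
    · exact Or.inr (Or.inr (Or.inl ⟨k, rfl⟩))
    · exact Or.inl ⟨6*k+2, by ring⟩
    · exact Or.inr (Or.inl ⟨3*k+1, by ring⟩)
    · exact Or.inl ⟨6*k+3, by ring⟩
    · exact Or.inr (Or.inr (Or.inr ⟨k, rfl⟩))
    · exact Or.inl ⟨6*k+4, by ring⟩
    · exact Or.inr (Or.inl ⟨3*k+2, by ring⟩)
    · exact Or.inl ⟨6*k+5, by ring⟩
  rcases hcases with ⟨m, hm⟩ | ⟨m, hm⟩ | ⟨k', hm⟩ | ⟨k', hm⟩ <;> rw [hm]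
  · refine ⟨2*m+2, (10*m+6)*(m+1), (10*m+6)*(m+1), by positivity, by positivity,
      by positivity, ?_⟩
    push_cast
    have h1 : ((2:ℚ)*m+2) ≠ 0 := by positivity
    have h2 : ((10:ℚ)*m+6)*(m+1) ≠ 0 := by positivity
    have h3 : (5:ℚ)*(2*m+1)+1 ≠ 0 := by positivity
    field_simp
    ring
  · refine ⟨20*m+11, 5*m+3, (20*m+11)*(5*m+3), by positivity, by positivity,
      by positivity, ?_⟩
    push_cast
    have h1 : ((20:ℚ)*m+11) ≠ 0 := by positivity
    have h2 : ((5:ℚ)*m+3) ≠ 0 := by positivity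
    have h3 : (5:ℚ)*(4*m+2)+1 ≠ 0 := by positivity
    field_simp
    ring
  · refine ⟨12*k'+5, (60*k'+21)*(12*k'+5), (20*k'+7)*(12*k'+5), by positivity, by positivity,
      by positivity, ?_⟩
    push_cast
    have h1 : ((12:ℚ)*k'+5) ≠ 0 := by positivity
    have h2 : ((60:ℚ)*k'+21)*(12*k'+5) ≠ 0 := by positivity
    have h2' : ((20:ℚ)*k'+7)*(12*k'+5) ≠ 0 := by positivity
    have h3 : (5:ℚ)*(12*k'+4)+1 ≠ 0 := by positivity
    field_simp
    ring
  · refine ⟨12*k'+9, (60*k'+41)*(12*k'+9), (60*k'+41)*(4*k'+3), by positivity, by positivity,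
      by positivity, ?_⟩
    push_cast
    have h1 : ((12:ℚ)*k'+9) ≠ 0 := by positivity
    have h2 : ((60:ℚ)*k'+41)*(12*k'+9) ≠ 0 := by positivity
    have h2' : ((60:ℚ)*k'+41)*(4*k'+3) ≠ 0 := by positivity
    have h3 : (5:ℚ)*(12*k'+8)+1 ≠ 0 := by positivity
    field_simp
    ring
end

section
/- For every nonnegative integer w and every i in {1, 2}, setting q = 84(3w + i) and a = 5q + 1, there exist positive integers b, c, d such that 5/a = 1/b + 1/c + 1/d. -/
/-- For every nonnegative integer `w` and every `i ∈ {1,2}`, setting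
`q = 84(3w + i)` and `a = 5q + 1`, there exist positive integers `b, c, d` with
`5/a = 1/b + 1/c + 1/d`. -/
theorem stmt_3 (w : ℕ) (i : ℕ) (hi : i = 1 ∨ i = 2) :
    ∃ b c d : ℕ, 0 < b ∧ 0 < c ∧ 0 < d ∧
      (5 : ℚ) / (5 * (84 * (3 * w + i)) + 1) = 1 / b + 1 / c + 1 / d := by
  rcases hi with rfl | rfl
  · refine ⟨252 * w + 86, 35280 * w ^ 2 + 23828 * w + 4023,
      11202105600 * w ^ 4 + 15131733120 * w ^ 3 + 7664692896 * w ^ 2 +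
        1725456964 * w + 145656738, by positivity, by positivity, by positivity, ?_⟩
    have hw : (0 : ℚ) ≤ (w : ℚ) := Nat.cast_nonneg w
    push_cast
    rw [div_add_div _ _ (by positivity) (by positivity),
      div_add_div _ _ (by positivity) (by positivity),
      div_eq_div_iff (by positivity) (by positivity)]
    ring
  · refine ⟨252 * w + 170, 35280 * w ^ 2 + 47348 * w + 15886,
      2800526400 * w ^ 4 + 7516968480 * w ^ 3 + 7566150564 * w ^ 2 +
        3384719128 * w + 567805355, by positivity, by positivity, by positivity, ?_⟩
    have hw : (0 : ℚ) ≤ (w : ℚ) := Nat.cast_nonneg w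
    push_cast
    rw [div_add_div _ _ (by positivity) (by positivity),
      div_add_div _ _ (by positivity) (by positivity),
      div_eq_div_iff (by positivity) (by positivity)]
    ring
end

section
/- Every prime p of the form p = 5q + 1 with q a positive integer not congruent to 0 modulo 12 can be written as p = 5(z(x(5y − 1) − y) − x) + 1 for some positive integers x, y, z; equivalently, q = z(x(5y − 1) − y) − x for some positive integers x, y, z. -/
/-- Every prime `p = 5q + 1` with `q` a positive integer not congruent to `0` mod `12`
can be written as `p = 5(z(x(5y − 1) − y) − x) + 1` for some positive integers `x, y, z`;
equivalently `q = z(x(5y − 1) − y) − x`. -/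
theorem stmt_4 (p : ℕ) (hp : p.Prime) (q : ℕ) (hq : 0 < q) (h12 : q % 12 ≠ 0)
    (hpq : p = 5 * q + 1) :
    ∃ x y z : ℤ, 1 ≤ x ∧ 1 ≤ y ∧ 1 ≤ z ∧
      (q : ℤ) = z * (x * (5 * y - 1) - y) - x := by
  -- q is even, since otherwise p would be an even prime > 2
  have h2 : q % 2 = 0 := by
    by_contra h
    have hd : 2 ∣ p := by omega
    rcases (hp.eq_one_or_self_of_dvd 2 hd) with h' | h' <;> omega
  -- q % 3 ≠ 1, since otherwise 3 ∣ p with p > 3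
  have h3 : q % 3 ≠ 1 := by
    intro h
    have hd : 3 ∣ p := by omega
    rcases (hp.eq_one_or_self_of_dvd 3 hd) with h' | h' <;> omega
  have hcase : q % 3 = 2 ∨ q % 4 = 2 := by omega
  rcases hcase with h | h
  · obtain ⟨k, hk⟩ : ∃ k, q = 3 * k + 2 := ⟨q / 3, by omega⟩
    refine ⟨1, 1, (k : ℤ) + 1, le_refl 1, le_refl 1, by omega, ?_⟩
    subst hk; push_cast; ring
  · obtain ⟨m, hm⟩ : ∃ m, q = 4 * m + 2 := ⟨q / 4, by omega⟩
    refine ⟨1, (m : ℤ) + 1, 1, le_refl 1, by omega, le_refl 1, ?_⟩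
    subst hm; push_cast; ring
end

section
/- For every positive integer k and every i in {0, 2, 3}, setting a = 4k + i, there exist positive integers b, c, d such that 4/a = 1/b + 1/c + 1/d and min{b, c, d} = ⌊a/4⌋ + 1. -/
/-- For every positive integer `k` and every `i ∈ {0,2,3}`, setting `a = 4k + i`,
there exist positive integers `b, c, d` with `4/a = 1/b + 1/c + 1/d` and
`min {b, c, d} = ⌊a/4⌋ + 1`. -/
theorem stmt_5 (k : ℕ) (hk : 0 < k) (i : ℕ) (hi : i = 0 ∨ i = 2 ∨ i = 3) :
    ∃ b c d : ℕ, 0 < b ∧ 0 < c ∧ 0 < d ∧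
      (4 : ℚ) / (4 * k + i) = 1 / b + 1 / c + 1 / d ∧
      min b (min c d) = (4 * k + i) / 4 + 1 := by
  have hkQ : (k : ℚ) ≠ 0 := Nat.cast_ne_zero.mpr hk.ne'
  have hk1 : (k : ℚ) + 1 ≠ 0 := by positivity
  rcases hi with rfl | rfl | rfl
  · refine ⟨k + 1, 2 * k * (k + 1), 2 * k * (k + 1), by omega, by positivity, by positivity,
      ?_, ?_⟩
    · push_cast
      field_simp
      ring
    · rw [min_self, min_eq_left (by nlinarith)]
      omega
  · refine ⟨k + 1, 2 * (2 * k + 1) * (k + 1), 2 * (2 * k + 1) * (k + 1), by omega,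
      by positivity, by positivity, ?_, ?_⟩
    · push_cast
      have h2 : (2 : ℚ) * k + 1 ≠ 0 := by positivity
      field_simp
      ring
    · rw [min_self, min_eq_left (by nlinarith)]
      omega
  · refine ⟨k + 1, 2 * (4 * k + 3) * (k + 1), 2 * (4 * k + 3) * (k + 1), by omega,
      by positivity, by positivity, ?_, ?_⟩
    · push_cast
      have h4 : (4 : ℚ) * k + 3 ≠ 0 := by positivity
      field_simp
      ring
    · rw [min_self, min_eq_left (by nlinarith)]
      omega
end

section
/- For every positive integer k and every i in {0, 2, 3, 4}, setting a = 5k + i, there exist positive integers b, c, d such that 5/a = 1/b + 1/c + 1/d and min{b, c, d} = ⌊a/5⌋ + 1. -/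
/-- For every positive integer `k` and every `i ∈ {0,2,3,4}`, setting `a = 5k + i`,
there exist positive integers `b, c, d` with `5/a = 1/b + 1/c + 1/d` and
`min {b, c, d} = ⌊a/5⌋ + 1`. -/
theorem stmt_6 (k : ℕ) (hk : 0 < k) (i : ℕ) (hi : i = 0 ∨ i = 2 ∨ i = 3 ∨ i = 4) :
    ∃ b c d : ℕ, 0 < b ∧ 0 < c ∧ 0 < d ∧
      (5 : ℚ) / (5 * k + i) = 1 / b + 1 / c + 1 / d ∧
      min b (min c d) = (5 * k + i) / 5 + 1 := by
  have hkq : (k : ℚ) ≠ 0 := Nat.cast_ne_zero.mpr hk.ne'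
  have hk1 : (k : ℚ) + 1 ≠ 0 := by positivity
  rcases hi with rfl | rfl | rfl | rfl
  · refine ⟨k + 1, 2 * k * (k + 1), 2 * k * (k + 1), by omega, by positivity, by positivity,
      ?_, ?_⟩
    · push_cast
      field_simp
      ring
    · rw [min_eq_left (le_min (by nlinarith) (by nlinarith))]
      omega
  · rcases Nat.even_or_odd k with ⟨m, hm⟩ | ⟨m, hm⟩
    · subst hm
      have hm0 : 0 < m := by omega
      refine ⟨m + m + 1, (5 * m + 1) * (2 * m + 1), (10 * m + 2) * (2 * m + 1),
        by omega, by positivity, by positivity, ?_, ?_⟩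
      · have h1 : ((m : ℚ) + m + 1) ≠ 0 := by positivity
        have h2 : ((5 * m + 1 : ℕ) : ℚ) * ((2 * m + 1 : ℕ)) ≠ 0 := by positivity
        push_cast
        field_simp
        ring
      · rw [min_eq_left (le_min (by nlinarith) (by nlinarith))]
        omega
    · subst hm
      refine ⟨2 * m + 2, (10 * m + 7) * (m + 1), (10 * m + 7) * (2 * m + 2),
        by omega, by positivity, by positivity, ?_, ?_⟩
      · have h1 : ((m : ℚ) + 1) ≠ 0 := by positivity
        push_cast
        field_simp
        ring
      · rw [min_eq_left (le_min (by nlinarith) (by nlinarith))]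
        omega
  · refine ⟨k + 1, (5 * k + 3) * (k + 1), (5 * k + 3) * (k + 1), by omega, by positivity,
      by positivity, ?_, ?_⟩
    · push_cast
      field_simp
      ring
    · rw [min_eq_left (le_min (by nlinarith) (by nlinarith))]
      omega
  · refine ⟨k + 1, 2 * (5 * k + 4) * (k + 1), 2 * (5 * k + 4) * (k + 1), by omega,
      by positivity, by positivity, ?_, ?_⟩
    · push_cast
      field_simp
      ring
    · rw [min_eq_left (le_min (by nlinarith) (by nlinarith))]
      omega
end

section
/- For every positive integer k and every i in {0, 2, 3, 4, 5}, setting a = 6k + i, there exist positive integers b, c, d such that 6/a = 1/b + 1/c + 1/d and min{b, c, d} = ⌊a/6⌋ + 1. -/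
/-- For every positive integer `k` and every `i ∈ {0,2,3,4,5}`, setting `a = 6k + i`,
there exist positive integers `b, c, d` with `6/a = 1/b + 1/c + 1/d` and
`min {b, c, d} = ⌊a/6⌋ + 1`. -/
theorem stmt_7 (k : ℕ) (hk : 0 < k) (i : ℕ)
    (hi : i = 0 ∨ i = 2 ∨ i = 3 ∨ i = 4 ∨ i = 5) :
    ∃ b c d : ℕ, 0 < b ∧ 0 < c ∧ 0 < d ∧
      (6 : ℚ) / (6 * k + i) = 1 / b + 1 / c + 1 / d ∧
      min b (min c d) = (6 * k + i) / 6 + 1 := by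
  have hkq : (0:ℚ) < (k:ℚ) := by exact_mod_cast hk
  rcases hi with rfl | rfl | rfl | rfl | rfl
  · refine ⟨k + 1, 2 * k * (k + 1), 2 * k * (k + 1), by omega, by positivity, by positivity,
      ?_, ?_⟩
    · push_cast
      field_simp
      ring
    · rw [min_self, min_eq_left (by nlinarith)]
      omega
  · refine ⟨k + 1, (3 * k + 1) * (k + 1), (3 * k + 1) * (k + 1), by omega, by positivity,
      by positivity, ?_, ?_⟩
    · push_cast
      field_simp
      ring
    · rw [min_self, min_eq_left (by nlinarith)]
      omega
  · refine ⟨k + 1, 2 * (2 * k + 1) * (k + 1), 2 * (2 * k + 1) * (k + 1), by omega,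
      by positivity, by positivity, ?_, ?_⟩
    · push_cast
      field_simp
      ring
    · rw [min_self, min_eq_left (by nlinarith)]
      omega
  · refine ⟨k + 1, 2 * (3 * k + 2) * (k + 1), 2 * (3 * k + 2) * (k + 1), by omega,
      by positivity, by positivity, ?_, ?_⟩
    · push_cast
      field_simp
      ring
    · rw [min_self, min_eq_left (by nlinarith)]
      omega
  · refine ⟨k + 1, 2 * (6 * k + 5) * (k + 1), 2 * (6 * k + 5) * (k + 1), by omega,
      by positivity, by positivity, ?_, ?_⟩
    · push_cast
      field_simp
      ring
    · rw [min_self, min_eq_left (by nlinarith)]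
      omega
end

section
/- Let r ≥ 2, q ≥ 2, t ≥ 1, m ≥ 1, n, s be integers with n + q ≥ 1 and q + s ≥ 1. If there exists an integer κ ≥ 1 such that (m + 1)(qr + t) = κ(r(n + q) − 1) and m(q + s) = κ(n + q), then r/(qr + t) = 1/((n + q)(qr + t)) + 1/(m(q + s)) + 1/(q + s) as rational numbers. -/
/-- Case (a) of Lemma 1: if `(m+1)(qr+t) = κ(r(n+q) − 1)` and `m(q+s) = κ(n+q)` for some
integer `κ ≥ 1`, then the generalized Erdős–Straus equation holds. -/
theorem stmt_8 (r q t m n s κ : ℤ)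
    (hr : 2 ≤ r) (hq : 2 ≤ q) (ht : 1 ≤ t) (hm : 1 ≤ m)
    (hnq : 1 ≤ n + q) (hqs : 1 ≤ q + s) (hκ : 1 ≤ κ)
    (h1 : (m + 1) * (q * r + t) = κ * (r * (n + q) - 1))
    (h2 : m * (q + s) = κ * (n + q)) :
    (r : ℚ) / (q * r + t) =
      1 / ((n + q) * (q * r + t)) + 1 / (m * (q + s)) + 1 / (q + s) := by
  have hD : (0:ℤ) < q * r + t := by nlinarith
  have hD' : ((q:ℚ) * r + t) ≠ 0 := by exact_mod_cast hD.ne'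
  have hN : ((n:ℚ) + q) ≠ 0 := by
    have : (0:ℤ) < n + q := hnq
    exact_mod_cast this.ne'
  have hm' : ((m:ℚ)) ≠ 0 := by
    have : (0:ℤ) < m := hm
    exact_mod_cast this.ne'
  have hS : ((q:ℚ) + s) ≠ 0 := by
    have : (0:ℤ) < q + s := hqs
    exact_mod_cast this.ne'
  have h1' : ((m:ℚ) + 1) * (q * r + t) = κ * (r * (n + q) - 1) := by exact_mod_cast h1
  have h2' : (m:ℚ) * (q + s) = κ * (n + q) := by exact_mod_cast h2
  have key : ((n:ℚ)+q)*((q:ℚ)*r+t)*((m:ℚ)+1) = ((r:ℚ)*(n+q)-1)*((m:ℚ)*(q+s)) := by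
    linear_combination ((n:ℚ)+q)*h1' - ((r:ℚ)*(n+q)-1)*h2'
  field_simp
  ring_nf
  ring_nf at key
  linear_combination (-1:ℚ)*key
end

section
/- Let r ≥ 2, q ≥ 2, t ≥ 1, m ≥ 1 be integers and suppose there exists an integer κ ≥ 1 such that rm divides (1 + m)(qr + t) + κ and rκ divides (1 + m)(qr + t) + κ. Define n = (κ + (m + 1)(qr + t))/(κr) − q and s = (κ + (m + 1)(qr + t))/(mr) − q. Then n and s are integers with n + q ≥ 1 and q + s ≥ 1, and r/(qr + t) = 1/((n + q)(qr + t)) + 1/(m(q + s)) + 1/(q + s) as rational numbers. -/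
/-- Case (b) of Lemma 1: if `rm ∣ (1+m)(qr+t) + κ` and `rκ ∣ (1+m)(qr+t) + κ` for some
integer `κ ≥ 1`, then with `n = (κ + (m+1)(qr+t))/(κr) − q` and
`s = (κ + (m+1)(qr+t))/(mr) − q` one has `n + q ≥ 1`, `q + s ≥ 1`, and the generalized
Erdős–Straus equation holds. -/
theorem stmt_9 (r q t m κ : ℤ)
    (hr : 2 ≤ r) (hq : 2 ≤ q) (ht : 1 ≤ t) (hm : 1 ≤ m) (hκ : 1 ≤ κ)
    (hdiv1 : r * m ∣ (1 + m) * (q * r + t) + κ)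
    (hdiv2 : r * κ ∣ (1 + m) * (q * r + t) + κ)
    (n s : ℤ)
    (hn : n = (κ + (m + 1) * (q * r + t)) / (κ * r) - q)
    (hs : s = (κ + (m + 1) * (q * r + t)) / (m * r) - q) :
    1 ≤ n + q ∧ 1 ≤ q + s ∧
      (r : ℚ) / (q * r + t) =
        1 / ((n + q) * (q * r + t)) + 1 / (m * (q + s)) + 1 / (q + s) := by
  obtain ⟨c, hc⟩ := hdiv2
  obtain ⟨d, hd⟩ := hdiv1
  have hQ : (0:ℤ) < q * r + t := by nlinarith
  have hA : (0:ℤ) < (1 + m) * (q * r + t) + κ := by nlinarith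
  have hκr : κ * r ≠ 0 := by positivity
  have hmr : m * r ≠ 0 := by positivity
  have hnc : n + q = c := by
    rw [hn]
    have : κ + (m + 1) * (q * r + t) = κ * r * c := by linarith [hc]
    rw [this, Int.mul_ediv_cancel_left _ hκr]; ring
  have hsd : q + s = d := by
    rw [hs]
    have : κ + (m + 1) * (q * r + t) = m * r * d := by linarith [hd]
    rw [this, Int.mul_ediv_cancel_left _ hmr]; ring
  have hc1 : 1 ≤ c := by
    by_contra h
    have : r * κ * c ≤ 0 := mul_nonpos_of_nonneg_of_nonpos (by positivity) (by omega)
    omega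
  have hd1 : 1 ≤ d := by
    by_contra h
    have : r * m * d ≤ 0 := mul_nonpos_of_nonneg_of_nonpos (by positivity) (by omega)
    omega
  refine ⟨by omega, by omega, ?_⟩
  have hcQ : ((1:ℤ) + m) * (q * r + t) + κ = r * κ * c := hc
  have hdQ : ((1:ℤ) + m) * (q * r + t) + κ = r * m * d := hd
  have hcQ' : ((1:ℚ) + m) * (q * r + t) + κ = r * κ * c := by exact_mod_cast congrArg (Int.cast : ℤ → ℚ) hcQ
  have hdQ' : ((1:ℚ) + m) * (q * r + t) + κ = r * m * d := by exact_mod_cast congrArg (Int.cast : ℤ → ℚ) hdQ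
  have hQ' : ((q:ℚ) * r + t) ≠ 0 := by exact_mod_cast hQ.ne'
  have hc' : (c:ℚ) ≠ 0 := by exact_mod_cast (by omega : c ≠ 0)
  have hd' : (d:ℚ) ≠ 0 := by exact_mod_cast (by omega : d ≠ 0)
  have hm' : (m:ℚ) ≠ 0 := by exact_mod_cast (by omega : m ≠ 0)
  have hnc' : (n:ℚ) + q = c := by exact_mod_cast congrArg (Int.cast : ℤ → ℚ) hnc
  have hsd' : (q:ℚ) + s = d := by exact_mod_cast congrArg (Int.cast : ℤ → ℚ) hsd
  have hr' : (r:ℚ) ≠ 0 := by positivity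
  have hmd : (m:ℚ) * d = κ * c := by
    have h := hcQ'.symm.trans hdQ'
    have : (r:ℚ) * (κ * c) = r * (m * d) := by ring_nf; ring_nf at h; linarith
    exact (mul_left_cancel₀ hr' this).symm
  rw [hnc', hsd']
  field_simp
  linear_combination (-(c:ℚ)) * hdQ' - hmd
end

section
/- Let r ≥ 2, t ≥ 1, s ≥ 1, κ ≥ 1, z ≥ 1 be integers with rs > t, κz > s, such that (rs − t) divides κ(rz + 1) and m := κ(rz + 1)/(rs − t) − 1 ≥ 1. Then r/(r(κz − s) + t) = 1/(z·m·(r(κz − s) + t)) + 1/(κ·z·m) + 1/(κ·z) as rational numbers, and all three denominators on the right are positive integers. -/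
/-- Case (c) of Lemma 1: if `rs > t`, `κz > s`, `(rs − t) ∣ κ(rz + 1)` and
`m = κ(rz+1)/(rs−t) − 1 ≥ 1`, then
`r/(r(κz − s) + t) = 1/(z m (r(κz−s)+t)) + 1/(κ z m) + 1/(κ z)`, and all three
denominators are positive integers. -/
theorem stmt_10 (r t s κ z : ℤ)
    (hr : 2 ≤ r) (ht : 1 ≤ t) (hs : 1 ≤ s) (hκ : 1 ≤ κ) (hz : 1 ≤ z)
    (hrst : t < r * s) (hκzs : s < κ * z)
    (hdvd : (r * s - t) ∣ κ * (r * z + 1))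
    (m : ℤ) (hm : m = κ * (r * z + 1) / (r * s - t) - 1) (hm1 : 1 ≤ m) :
    0 < z * m * (r * (κ * z - s) + t) ∧ 0 < κ * z * m ∧ 0 < κ * z ∧
      (r : ℚ) / (r * (κ * z - s) + t) =
        1 / (z * m * (r * (κ * z - s) + t)) + 1 / (κ * z * m) + 1 / (κ * z) := by
  have key : (m + 1) * (r * s - t) = κ * (r * z + 1) := by
    rw [hm, sub_add_cancel, Int.ediv_mul_cancel hdvd]
  have hD : 0 < r * (κ * z - s) + t := by nlinarith
  have hm0 : 0 < m := hm1
  have hzm : 0 < z * m * (r * (κ * z - s) + t) := by positivity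
  refine ⟨hzm, by positivity, by positivity, ?_⟩
  have keyq : ((m : ℚ) + 1) * (r * s - t) = κ * (r * z + 1) := by exact_mod_cast key
  have hDq : ((r : ℚ) * (κ * z - s) + t) ≠ 0 := by
    have : ((r * (κ * z - s) + t : ℤ) : ℚ) ≠ 0 := by exact_mod_cast hD.ne'
    push_cast at this; exact this
  have hzq : (z : ℚ) ≠ 0 := by exact_mod_cast (by linarith : z ≠ 0)
  have hmq : (m : ℚ) ≠ 0 := by exact_mod_cast hm0.ne'
  have hκq : (κ : ℚ) ≠ 0 := by exact_mod_cast (by linarith : κ ≠ 0)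
  have hmain : (r : ℚ) * κ * z * m = κ + (m + 1) * ((r : ℚ) * (κ * z - s) + t) := by
    linear_combination keyq
  have expand : (1:ℚ) / (z * m * ((r:ℚ) * (κ * z - s) + t)) + 1 / (κ * z * m) + 1 / (κ * z)
      = ((κ:ℚ) + (m + 1) * ((r:ℚ) * (κ * z - s) + t)) / (κ * z * m * ((r:ℚ) * (κ * z - s) + t)) := by
    rw [div_add_div _ _ (mul_ne_zero (mul_ne_zero hzq hmq) hDq) (mul_ne_zero (mul_ne_zero hκq hzq) hmq),
      div_add_div _ _ (mul_ne_zero (mul_ne_zero (mul_ne_zero hzq hmq) hDq) (mul_ne_zero (mul_ne_zero hκq hzq) hmq)) (mul_ne_zero hκq hzq),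
      div_eq_div_iff (mul_ne_zero (mul_ne_zero (mul_ne_zero (mul_ne_zero hzq hmq) hDq) (mul_ne_zero (mul_ne_zero hκq hzq) hmq)) (mul_ne_zero hκq hzq)) (mul_ne_zero (mul_ne_zero (mul_ne_zero hκq hzq) hmq) hDq)]
    ring
  rw [expand, ← hmain]
  rw [div_eq_div_iff hDq (by positivity)]
  ring
end

section
/- Let r ≥ 2, t ≥ 1, s ≥ 1, κ ≥ 1, β ≥ 1 be integers with rs > t and β > s, such that (rs − t) divides (κ + βr), m := (κ + βr)/(rs − t) − 1 ≥ 1, and κ divides β·m·(r(β − s) + t). Then r/(r(β − s) + t) = 1/β + 1/((β·m·(r(β − s) + t))/κ) + 1/(β·m) as rational numbers, and all three denominators on the right are positive integers. -/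
/-- Case (d) of Lemma 1: if `rs > t`, `β > s`, `(rs − t) ∣ (κ + βr)`,
`m = (κ + βr)/(rs − t) − 1 ≥ 1`, and `κ ∣ β m (r(β − s) + t)`, then
`r/(r(β − s) + t) = 1/β + 1/(β m (r(β−s)+t)/κ) + 1/(β m)`, and all three
denominators are positive integers. -/
theorem stmt_11 (r t s κ β : ℤ)
    (hr : 2 ≤ r) (ht : 1 ≤ t) (hs : 1 ≤ s) (hκ : 1 ≤ κ) (hβ : 1 ≤ β)
    (hrst : t < r * s) (hβs : s < β)
    (hdvd : (r * s - t) ∣ (κ + β * r))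
    (m : ℤ) (hm : m = (κ + β * r) / (r * s - t) - 1) (hm1 : 1 ≤ m)
    (hκdvd : κ ∣ β * m * (r * (β - s) + t)) :
    0 < β ∧ 0 < β * m * (r * (β - s) + t) / κ ∧ 0 < β * m ∧
      (r : ℚ) / (r * (β - s) + t) =
        1 / β + 1 / (β * m * (r * (β - s) + t) / κ : ℤ) + 1 / (β * m) := by
  obtain ⟨c, hc⟩ := hdvd
  have hrs : 0 < r * s - t := by linarith
  have hq : 0 < r * (β - s) + t := by nlinarith
  have hmc : m = c - 1 := by
    rw [hm, hc, Int.mul_ediv_cancel_left _ (by linarith : r * s - t ≠ 0)]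
  have hκeq : κ = (m + 1) * (r * s - t) - β * r := by
    subst hmc; linear_combination hc
  obtain ⟨d, hd⟩ := hκdvd
  have hdval : β * m * (r * (β - s) + t) / κ = d := by
    rw [hd, Int.mul_ediv_cancel_left _ (by linarith : κ ≠ 0)]
  have hdpos : 0 < d := by
    have h1 : 0 < κ * d := by rw [← hd]; positivity
    nlinarith
  refine ⟨by linarith, by rw [hdval]; exact hdpos, by positivity, ?_⟩
  rw [hdval]
  have hdQ : ((β : ℚ) * m * (r * (β - s) + t)) = κ * d := by exact_mod_cast hd
  have hκQ : (κ : ℚ) = (m + 1) * (r * s - t) - β * r := by exact_mod_cast hκeq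
  have hqQ : ((r : ℚ) * (β - s) + t) ≠ 0 := by
    have : (0:ℚ) < r * (β - s) + t := by exact_mod_cast hq
    linarith
  have hβQ : (β : ℚ) ≠ 0 := by positivity
  have hmQ : (m : ℚ) ≠ 0 := by
    have : (0:ℚ) < m := by exact_mod_cast hm1.trans_lt' zero_lt_one
    linarith
  have hdQ' : (d : ℚ) ≠ 0 := by
    have : (0:ℚ) < d := by exact_mod_cast hdpos
    linarith
  field_simp
  linear_combination (-1:ℚ) * hdQ - d * hκQ
end

section
/- For all positive integers x, y, z, one has 5/(5(z(x(5y − 1) − y) − x) + 1) = 1/((x(5y − 1) − y)((5y − 1)z − 1)(5x((5y − 1)z − 1) − 5yz + 1)) + 1/(z(x(5y − 1) − y)((5y − 1)z − 1)) + 1/(z(x(5y − 1) − y)) as rational numbers, and all three denominators on the right are positive integers. -/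
/-- Erdős–Straus decomposition of `5/(5 p₁(x,y,z) + 1)` for
`p₁(x,y,z) = z(x(5y − 1) − y) − x`, with all three denominators positive integers. -/
theorem stmt_12 (x y z : ℤ) (hx : 1 ≤ x) (hy : 1 ≤ y) (hz : 1 ≤ z) :
    0 < (x * (5 * y - 1) - y) * ((5 * y - 1) * z - 1) *
        (5 * x * ((5 * y - 1) * z - 1) - 5 * y * z + 1) ∧
    0 < z * (x * (5 * y - 1) - y) * ((5 * y - 1) * z - 1) ∧
    0 < z * (x * (5 * y - 1) - y) ∧
      (5 : ℚ) / (5 * (z * (x * (5 * y - 1) - y) - x) + 1) =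
        1 / ((x * (5 * y - 1) - y) * ((5 * y - 1) * z - 1) *
              (5 * x * ((5 * y - 1) * z - 1) - 5 * y * z + 1)) +
        1 / (z * (x * (5 * y - 1) - y) * ((5 * y - 1) * z - 1)) +
        1 / (z * (x * (5 * y - 1) - y)) := by
  have hA : (0:ℤ) < x * (5 * y - 1) - y := by nlinarith
  have hB : (0:ℤ) < (5 * y - 1) * z - 1 := by nlinarith
  have hC : (0:ℤ) < 5 * x * ((5 * y - 1) * z - 1) - 5 * y * z + 1 := by nlinarith
  have hz0 : (0:ℤ) < z := hz
  refine ⟨by positivity, by positivity, by positivity, ?_⟩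
  have hAq : ((x : ℚ) * (5 * y - 1) - y) ≠ 0 := by exact_mod_cast hA.ne'
  have hBq : ((5 * (y:ℚ) - 1) * z - 1) ≠ 0 := by exact_mod_cast hB.ne'
  have hCq : (5 * (x:ℚ) * ((5 * y - 1) * z - 1) - 5 * y * z + 1) ≠ 0 := by
    exact_mod_cast hC.ne'
  have hzq : (z:ℚ) ≠ 0 := by exact_mod_cast hz0.ne'
  have hD : (5 * ((z:ℚ) * (x * (5 * y - 1) - y) - x) + 1) ≠ 0 := by
    have : 5 * ((z:ℚ) * (x * (5 * y - 1) - y) - x) + 1 =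
        5 * x * ((5 * y - 1) * z - 1) - 5 * y * z + 1 := by ring
    rw [this]; exact hCq
  rw [div_add_div _ _ (mul_ne_zero (mul_ne_zero hAq hBq) hCq) (mul_ne_zero (mul_ne_zero hzq hAq) hBq),
    div_add_div _ _ (mul_ne_zero (mul_ne_zero (mul_ne_zero hAq hBq) hCq) (mul_ne_zero (mul_ne_zero hzq hAq) hBq)) (mul_ne_zero hzq hAq),
    div_eq_div_iff hD (mul_ne_zero (mul_ne_zero (mul_ne_zero (mul_ne_zero hAq hBq) hCq) (mul_ne_zero (mul_ne_zero hzq hAq) hBq)) (mul_ne_zero hzq hAq))]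
  ring
end

section
/- For all positive integers x, y, one has 5/((5x − 2)(5y − 3)) = 1/((5x − 2)(10y² − 11y + 3)) + 1/(10xy − 5x − 4y + 2) + 1/(10xy − 5x − 4y + 2) as rational numbers, and all three denominators on the right are positive integers. In particular, with p₂(x, y) = x(5y − 3) − 2y + 1 one has 5·p₂(x, y) + 1 = (5x − 2)(5y − 3), so 5/(5·p₂(x, y) + 1) is a sum of three unit fractions. -/
/-- Erdős–Straus decomposition attached to `p₂(x,y) = x(5y − 3) − 2y + 1`:
`5/((5x−2)(5y−3)) = 1/((5x−2)(10y²−11y+3)) + 1/(10xy−5x−4y+2) + 1/(10xy−5x−4y+2)`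
with positive integer denominators, and `5 p₂(x,y) + 1 = (5x−2)(5y−3)`, so
`5/(5 p₂(x,y) + 1)` is a sum of three unit fractions. -/
theorem stmt_13 (x y : ℤ) (hx : 1 ≤ x) (hy : 1 ≤ y) :
    (0 < (5 * x - 2) * (10 * y ^ 2 - 11 * y + 3) ∧
     0 < 10 * x * y - 5 * x - 4 * y + 2 ∧
      (5 : ℚ) / ((5 * x - 2) * (5 * y - 3)) =
        1 / ((5 * x - 2) * (10 * y ^ 2 - 11 * y + 3)) +
        1 / (10 * x * y - 5 * x - 4 * y + 2) +
        1 / (10 * x * y - 5 * x - 4 * y + 2)) ∧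
    5 * (x * (5 * y - 3) - 2 * y + 1) + 1 = (5 * x - 2) * (5 * y - 3) ∧
    ∃ b c d : ℤ, 1 ≤ b ∧ 1 ≤ c ∧ 1 ≤ d ∧
      (5 : ℚ) / (5 * (x * (5 * y - 3) - 2 * y + 1) + 1) = 1 / b + 1 / c + 1 / d := by
  have hq1 : ((5 : ℚ) * x - 2) ≠ 0 := by
    have : (1 : ℚ) ≤ x := by exact_mod_cast hx
    nlinarith
  have hq2 : ((5 : ℚ) * y - 3) ≠ 0 := by
    have : (1 : ℚ) ≤ y := by exact_mod_cast hy
    nlinarith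
  have hq3 : ((10 : ℚ) * y ^ 2 - 11 * y + 3) ≠ 0 := by
    have : (1 : ℚ) ≤ y := by exact_mod_cast hy
    nlinarith
  have hq4 : ((10 : ℚ) * x * y - 5 * x - 4 * y + 2) ≠ 0 := by
    have h1 : (1 : ℚ) ≤ x := by exact_mod_cast hx
    have h2 : (1 : ℚ) ≤ y := by exact_mod_cast hy
    nlinarith
  have heq : (5 : ℚ) / ((5 * x - 2) * (5 * y - 3)) =
        1 / ((5 * x - 2) * (10 * y ^ 2 - 11 * y + 3)) +
        1 / (10 * x * y - 5 * x - 4 * y + 2) +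
        1 / (10 * x * y - 5 * x - 4 * y + 2) := by
    rw [eq_comm, div_add_div _ _ (mul_ne_zero hq1 hq3) hq4,
      div_add_div _ _ (mul_ne_zero (mul_ne_zero hq1 hq3) hq4) hq4,
      div_eq_div_iff (mul_ne_zero (mul_ne_zero (mul_ne_zero hq1 hq3) hq4) hq4) (mul_ne_zero hq1 hq2)]
    ring
  have h5 : (3 : ℤ) ≤ 5 * x - 2 := by linarith
  have h6 : (2 : ℤ) ≤ 10 * y ^ 2 - 11 * y + 3 := by nlinarith [sq_nonneg (y - 1)]
  have h7 : (3 : ℤ) ≤ 10 * x * y - 5 * x - 4 * y + 2 := by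
    nlinarith [mul_nonneg (by linarith : (0:ℤ) ≤ x - 1) (by linarith : (0:ℤ) ≤ y - 1)]
  have h8 : (6 : ℤ) ≤ (5 * x - 2) * (10 * y ^ 2 - 11 * y + 3) := by nlinarith
  refine ⟨⟨by linarith, by linarith, heq⟩, by ring,
    (5 * x - 2) * (10 * y ^ 2 - 11 * y + 3), 10 * x * y - 5 * x - 4 * y + 2,
    10 * x * y - 5 * x - 4 * y + 2, by linarith, by linarith, by linarith, ?_⟩
  have : (5 : ℚ) * (x * (5 * y - 3) - 2 * y + 1) + 1 = (5 * x - 2) * (5 * y - 3) := by ring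
  push_cast
  rw [this]
  exact heq
end

section
/- For all positive integers x, y, one has 5/((5x − 3)(10y − 7)) = 1/(2(5x − 3)(30y² − 41y + 14)) + 1/(30xy − 20x − 18y + 12) + 1/(15xy − 10x − 9y + 6) as rational numbers, and all three denominators on the right are positive integers. In particular, with p₃(x, y) = x(10y − 7) − 6y + 4 one has 5·p₃(x, y) + 1 = (5x − 3)(10y − 7), so 5/(5·p₃(x, y) + 1) is a sum of three unit fractions. -/
/-- Erdős–Straus decomposition attached to `p₃(x,y) = x(10y − 7) − 6y + 4`:
`5/((5x−3)(10y−7)) = 1/(2(5x−3)(30y²−41y+14)) + 1/(30xy−20x−18y+12) + 1/(15xy−10x−9y+6)`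
with positive integer denominators, and `5 p₃(x,y) + 1 = (5x−3)(10y−7)`, so
`5/(5 p₃(x,y) + 1)` is a sum of three unit fractions. -/
theorem stmt_14 (x y : ℤ) (hx : 1 ≤ x) (hy : 1 ≤ y) :
    (0 < 2 * (5 * x - 3) * (30 * y ^ 2 - 41 * y + 14) ∧
     0 < 30 * x * y - 20 * x - 18 * y + 12 ∧
     0 < 15 * x * y - 10 * x - 9 * y + 6 ∧
      (5 : ℚ) / ((5 * x - 3) * (10 * y - 7)) =
        1 / (2 * (5 * x - 3) * (30 * y ^ 2 - 41 * y + 14)) +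
        1 / (30 * x * y - 20 * x - 18 * y + 12) +
        1 / (15 * x * y - 10 * x - 9 * y + 6)) ∧
    5 * (x * (10 * y - 7) - 6 * y + 4) + 1 = (5 * x - 3) * (10 * y - 7) ∧
    ∃ b c d : ℤ, 1 ≤ b ∧ 1 ≤ c ∧ 1 ≤ d ∧
      (5 : ℚ) / (5 * (x * (10 * y - 7) - 6 * y + 4) + 1) = 1 / b + 1 / c + 1 / d := by
  have hA : (2:ℤ) ≤ 5 * x - 3 := by linarith
  have hB : (1:ℤ) ≤ 3 * y - 2 := by linarith
  have hC : (3:ℤ) ≤ 10 * y - 7 := by linarith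
  have hAB : 0 < (5 * x - 3) * (3 * y - 2) := by positivity
  have h1 : 0 < 2 * (5 * x - 3) * (30 * y ^ 2 - 41 * y + 14) := by nlinarith [mul_pos hAB (show (0:ℤ) < 10 * y - 7 by linarith)]
  have h2 : 0 < 30 * x * y - 20 * x - 18 * y + 12 := by nlinarith [hAB]
  have h3 : 0 < 15 * x * y - 10 * x - 9 * y + 6 := by nlinarith [hAB]
  have hxq : (1:ℚ) ≤ (x:ℚ) := by exact_mod_cast hx
  have hyq : (1:ℚ) ≤ (y:ℚ) := by exact_mod_cast hy
  have hAq : (0:ℚ) < 5 * x - 3 := by linarith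
  have hBq : (0:ℚ) < 3 * y - 2 := by linarith
  have hCq : (0:ℚ) < 10 * y - 7 := by linarith
  have d1 : (2 * (5 * (x:ℚ) - 3) * (30 * y ^ 2 - 41 * y + 14)) ≠ 0 := by
    have : 30 * (y:ℚ) ^ 2 - 41 * y + 14 = (10 * y - 7) * (3 * y - 2) := by ring
    rw [this]; positivity
  have d2 : (30 * (x:ℚ) * y - 20 * x - 18 * y + 12) ≠ 0 := by
    have : 30 * (x:ℚ) * y - 20 * x - 18 * y + 12 = 2 * ((5 * x - 3) * (3 * y - 2)) := by ring
    rw [this]; positivity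
  have d3 : (15 * (x:ℚ) * y - 10 * x - 9 * y + 6) ≠ 0 := by
    have : 15 * (x:ℚ) * y - 10 * x - 9 * y + 6 = (5 * x - 3) * (3 * y - 2) := by ring
    rw [this]; positivity
  have dA : (5 * (x:ℚ) - 3) ≠ 0 := ne_of_gt hAq
  have dC : (10 * (y:ℚ) - 7) ≠ 0 := ne_of_gt hCq
  refine ⟨⟨h1, h2, h3, ?_⟩, by ring, ?_⟩
  · rw [div_add_div _ _ d1 d2, div_add_div _ _ (mul_ne_zero d1 d2) d3, div_eq_div_iff (mul_ne_zero dA dC) (mul_ne_zero (mul_ne_zero d1 d2) d3)]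
    ring
  · refine ⟨2 * (5 * x - 3) * (30 * y ^ 2 - 41 * y + 14),
      30 * x * y - 20 * x - 18 * y + 12, 15 * x * y - 10 * x - 9 * y + 6,
      by linarith, by linarith, by linarith, ?_⟩
    have key : (5 : ℚ) / (5 * (x * (10 * y - 7) - 6 * y + 4) + 1) =
        5 / ((5 * x - 3) * (10 * y - 7)) := by ring_nf
    rw [key]
    push_cast
    rw [div_add_div _ _ d1 d2, div_add_div _ _ (mul_ne_zero d1 d2) d3, div_eq_div_iff (mul_ne_zero dA dC) (mul_ne_zero (mul_ne_zero d1 d2) d3)]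
    ring
end

section
/- For every nonnegative integer x and every positive integer y, one has 5/((1260x + 421)(5y − 4)) = 1/((126x + 43)(140x + 47)(1260x + 421)(5y − 4)) + 1/(2(126x + 43)(140x + 47)(5y − 4)) + 1/(2(126x + 43)(5y − 4)) as rational numbers, and all three denominators on the right are positive integers. In particular, with q = p₅(x, y) = 252x(5y − 4) + 421y − 337 one has 5q + 1 = (1260x + 421)(5y − 4), so 5/(5q + 1) is a sum of three unit fractions. -/
/-- Erdős–Straus decomposition attached to `p₅(x,y) = 252x(5y − 4) + 421y − 337`:
the decomposition of `5/((1260x + 421)(5y − 4))` with positive integer denominators,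
the identity `5 p₅(x,y) + 1 = (1260x + 421)(5y − 4)`, and hence `5/(5 p₅(x,y) + 1)`
is a sum of three unit fractions. -/
theorem stmt_17 (x y : ℤ) (hx : 0 ≤ x) (hy : 1 ≤ y) :
    (0 < (126 * x + 43) * (140 * x + 47) * (1260 * x + 421) * (5 * y - 4) ∧
     0 < 2 * (126 * x + 43) * (140 * x + 47) * (5 * y - 4) ∧
     0 < 2 * (126 * x + 43) * (5 * y - 4) ∧
      (5 : ℚ) / ((1260 * x + 421) * (5 * y - 4)) =
        1 / ((126 * x + 43) * (140 * x + 47) * (1260 * x + 421) * (5 * y - 4)) +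
        1 / (2 * (126 * x + 43) * (140 * x + 47) * (5 * y - 4)) +
        1 / (2 * (126 * x + 43) * (5 * y - 4))) ∧
    5 * (252 * x * (5 * y - 4) + 421 * y - 337) + 1 = (1260 * x + 421) * (5 * y - 4) ∧
    ∃ b c d : ℤ, 1 ≤ b ∧ 1 ≤ c ∧ 1 ≤ d ∧
      (5 : ℚ) / (5 * (252 * x * (5 * y - 4) + 421 * y - 337) + 1) =
        1 / b + 1 / c + 1 / d := by
  have h1 : (0:ℤ) < 126 * x + 43 := by linarith
  have h2 : (0:ℤ) < 140 * x + 47 := by linarith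
  have h3 : (0:ℤ) < 1260 * x + 421 := by linarith
  have h4 : (0:ℤ) < 5 * y - 4 := by linarith
  have hq1 : ((126 * x + 43 : ℤ):ℚ) ≠ 0 := Int.cast_ne_zero.2 h1.ne'
  have hq2 : ((140 * x + 47 : ℤ):ℚ) ≠ 0 := Int.cast_ne_zero.2 h2.ne'
  have hq3 : ((1260 * x + 421 : ℤ):ℚ) ≠ 0 := Int.cast_ne_zero.2 h3.ne'
  have hq4 : ((5 * y - 4 : ℤ):ℚ) ≠ 0 := Int.cast_ne_zero.2 h4.ne'
  push_cast at hq1 hq2 hq3 hq4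
  have key : (5 : ℚ) / ((1260 * x + 421) * (5 * y - 4)) =
        1 / ((126 * x + 43) * (140 * x + 47) * (1260 * x + 421) * (5 * y - 4)) +
        1 / (2 * (126 * x + 43) * (140 * x + 47) * (5 * y - 4)) +
        1 / (2 * (126 * x + 43) * (5 * y - 4)) := by
    field_simp
    ring
  have hid : 5 * (252 * x * (5 * y - 4) + 421 * y - 337) + 1 = (1260 * x + 421) * (5 * y - 4) := by ring
  refine ⟨⟨by positivity, by positivity, by positivity, key⟩, hid, 
    (126 * x + 43) * (140 * x + 47) * (1260 * x + 421) * (5 * y - 4),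
    2 * (126 * x + 43) * (140 * x + 47) * (5 * y - 4),
    2 * (126 * x + 43) * (5 * y - 4), ?_, ?_, ?_, ?_⟩
  · nlinarith [mul_pos (mul_pos (mul_pos h1 h2) h3) h4]
  · nlinarith [mul_pos (mul_pos (mul_pos (by norm_num : (0:ℤ)<2) h1) h2) h4]
  · nlinarith [mul_pos (mul_pos (by norm_num : (0:ℤ)<2) h1) h4]
  · push_cast
    rw [show (5:ℚ) * (252 * x * (5 * y - 4) + 421 * y - 337) + 1 = (1260 * x + 421) * (5 * y - 4) by ring]
    exact key
end

section
/- For every nonnegative integer x and every positive integer y, one has 5/((1260x + 841)(5y − 4)) = 1/((28x + 19)(1260x + 841)(5y − 4)) + 1/(2(28x + 19)(126x + 85)(1260x + 841)(5y − 4)) + 1/(2(126x + 85)(5y − 4)) as rational numbers, and all three denominators on the right are positive integers. In particular, with q = p₆(x, y) = 252x(5y − 4) + 841y − 673 one has 5q + 1 = (1260x + 841)(5y − 4), so 5/(5q + 1) is a sum of three unit fractions. -/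
/-- Erdős–Straus decomposition attached to `p₆(x,y) = 252x(5y − 4) + 841y − 673`:
the decomposition of `5/((1260x + 841)(5y − 4))` with positive integer denominators,
the identity `5 p₆(x,y) + 1 = (1260x + 841)(5y − 4)`, and hence `5/(5 p₆(x,y) + 1)`
is a sum of three unit fractions. -/
theorem stmt_18 (x y : ℤ) (hx : 0 ≤ x) (hy : 1 ≤ y) :
    (0 < (28 * x + 19) * (1260 * x + 841) * (5 * y - 4) ∧
     0 < 2 * (28 * x + 19) * (126 * x + 85) * (1260 * x + 841) * (5 * y - 4) ∧
     0 < 2 * (126 * x + 85) * (5 * y - 4) ∧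
      (5 : ℚ) / ((1260 * x + 841) * (5 * y - 4)) =
        1 / ((28 * x + 19) * (1260 * x + 841) * (5 * y - 4)) +
        1 / (2 * (28 * x + 19) * (126 * x + 85) * (1260 * x + 841) * (5 * y - 4)) +
        1 / (2 * (126 * x + 85) * (5 * y - 4))) ∧
    5 * (252 * x * (5 * y - 4) + 841 * y - 673) + 1 = (1260 * x + 841) * (5 * y - 4) ∧
    ∃ b c d : ℤ, 1 ≤ b ∧ 1 ≤ c ∧ 1 ≤ d ∧
      (5 : ℚ) / (5 * (252 * x * (5 * y - 4) + 841 * y - 673) + 1) =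
        1 / b + 1 / c + 1 / d := by
  have h1 : (0:ℤ) < 28 * x + 19 := by linarith
  have h2 : (0:ℤ) < 126 * x + 85 := by linarith
  have h3 : (0:ℤ) < 1260 * x + 841 := by linarith
  have h4 : (0:ℤ) < 5 * y - 4 := by linarith
  have hq1 : ((28:ℚ) * x + 19) ≠ 0 := by positivity
  have hq2 : ((126:ℚ) * x + 85) ≠ 0 := by positivity
  have hq3 : ((1260:ℚ) * x + 841) ≠ 0 := by positivity
  have hq4 : ((5:ℚ) * y - 4) ≠ 0 := by
    have : (0:ℚ) < 5 * y - 4 := by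
      have : (1:ℚ) ≤ y := by exact_mod_cast hy
      linarith
    linarith
  have key : (5 : ℚ) / ((1260 * x + 841) * (5 * y - 4)) =
        1 / ((28 * x + 19) * (1260 * x + 841) * (5 * y - 4)) +
        1 / (2 * (28 * x + 19) * (126 * x + 85) * (1260 * x + 841) * (5 * y - 4)) +
        1 / (2 * (126 * x + 85) * (5 * y - 4)) := by
    field_simp
    ring
  have pos1 : (1:ℤ) ≤ (28 * x + 19) * (1260 * x + 841) * (5 * y - 4) := by
    have : (0:ℤ) < (28 * x + 19) * (1260 * x + 841) * (5 * y - 4) := by positivity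
    omega
  have pos2 : (1:ℤ) ≤ 2 * (28 * x + 19) * (126 * x + 85) * (1260 * x + 841) * (5 * y - 4) := by
    have : (0:ℤ) < 2 * (28 * x + 19) * (126 * x + 85) * (1260 * x + 841) * (5 * y - 4) := by positivity
    omega
  have pos3 : (1:ℤ) ≤ 2 * (126 * x + 85) * (5 * y - 4) := by
    have : (0:ℤ) < 2 * (126 * x + 85) * (5 * y - 4) := by positivity
    omega
  refine ⟨⟨by positivity, by positivity, by positivity, key⟩, by ring, ?_⟩
  refine ⟨(28 * x + 19) * (1260 * x + 841) * (5 * y - 4),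
    2 * (28 * x + 19) * (126 * x + 85) * (1260 * x + 841) * (5 * y - 4),
    2 * (126 * x + 85) * (5 * y - 4), pos1, pos2, pos3, ?_⟩
  have : (5 * (252 * x * (5 * y - 4) + 841 * y - 673) + 1 : ℚ)
      = (1260 * x + 841) * (5 * y - 4) := by ring
  rw [this]
  push_cast
  exact key
end
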